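/- Let C_S be the n×n real symmetric matrix with entries (C_S)_{ij} = (C_{ij} + C_{ji})/2 where C_{ij} = 4δ_{ij} - Σ_{μ=1}^4 δ_{j, i+a_μ mod n} - 3δ_{ij} + Σ_{μ=1}^3 δ_{j, i+a_μ+a_4 mod n}. Then for each 1 ≤ k ≤ n, the vector v_k = (ω^k, ω^{2k}, ..., ω^{nk}) with ω = e^{2πi/n} is an eigenvector of C_S with eigenvalue b_k = (1/2)·Π_{μ=1}^4 (ω^{k·a_μ} - 1). -/
import Mathlib


open Complex Matrix

/-- The charge matrix of the right-handed fermions minus the identity part: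
`C = C_R - C_L` with `(C_R)_{ij} = 4δ_{ij} - Σ_μ δ_{j,i+a_μ}` and
`(C_L)_{ij} = 3δ_{ij} - Σ_{μ<4} δ_{j,i+a_μ+a_4}`, indices mod `n`. -/
noncomputable def Cmat (n : ℕ) [NeZero n] (a : Fin 4 → ℤ) :
    Matrix (ZMod n) (ZMod n) ℂ := fun i j =>
  4 * (if i = j then 1 else 0)
    - (∑ μ : Fin 4, if j = i + ((a μ : ZMod n)) then 1 else 0)
    - 3 * (if i = j then 1 else 0)
    + (∑ μ : Fin 3, if j = i + ((a μ.castSucc : ZMod n)) + ((a 3 : ZMod n)) then 1 else 0)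

/-- The symmetrized anomaly matrix `C_S = (C + ᵗC)/2`. -/
noncomputable def CS (n : ℕ) [NeZero n] (a : Fin 4 → ℤ) :
    Matrix (ZMod n) (ZMod n) ℂ :=
  (1 / 2 : ℂ) • (Cmat n a + (Cmat n a)ᵀ)

lemma Cmat_row (n : ℕ) [NeZero n] (a : Fin 4 → ℤ) (v : ZMod n → ℂ) (i : ZMod n) :
    (Cmat n a).mulVec v i = 4 * v i - (∑ μ : Fin 4, v (i + (a μ : ZMod n)))
      - 3 * v i + ∑ μ : Fin 3, v (i + (a μ.castSucc : ZMod n) + (a 3 : ZMod n)) := by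
  simp only [Cmat, mulVec, dotProduct, sub_mul, add_mul, ite_mul, one_mul, zero_mul,
    Finset.sum_sub_distrib, Finset.sum_add_distrib, Finset.sum_mul]
  rw [Finset.sum_comm, Finset.sum_comm (f := fun (x : ZMod n) (μ : Fin 3) =>
    if x = i + ((a μ.castSucc : ZMod n)) + ((a 3 : ZMod n)) then v x else 0)]
  simp [Finset.sum_ite_eq, Finset.sum_ite_eq', mul_comm]

lemma Cmat_col (n : ℕ) [NeZero n] (a : Fin 4 → ℤ) (v : ZMod n → ℂ) (i : ZMod n) :
    (Cmat n a)ᵀ.mulVec v i = 4 * v i - (∑ μ : Fin 4, v (i - (a μ : ZMod n)))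
      - 3 * v i + ∑ μ : Fin 3, v (i - ((a μ.castSucc : ZMod n) + (a 3 : ZMod n))) := by
  simp only [Cmat, mulVec, dotProduct, transpose_apply, sub_mul, add_mul, ite_mul, one_mul,
    zero_mul, Finset.sum_sub_distrib, Finset.sum_add_distrib, Finset.sum_mul, add_assoc]
  have h1 : ∀ (j c : ZMod n), (i = j + c) ↔ (j = i - c) := by
    intro j c; constructor <;> intro h <;> simp [h]
  simp only [h1]
  rw [Finset.sum_comm, Finset.sum_comm (f := fun (x : ZMod n) (μ : Fin 3) =>
    if x = i - ((a μ.castSucc : ZMod n) + (a 3 : ZMod n)) then v x else 0)]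
  simp [Finset.sum_ite_eq, Finset.sum_ite_eq', mul_comm, eq_comm]


theorem CS_eigenvector (n : ℕ) [NeZero n] (hn : 2 ≤ n) (a : Fin 4 → ℤ)
    (hcop : ∀ μ, Int.gcd (a μ) n = 1)
    (hsum : (n : ℤ) ∣ ∑ μ : Fin 4, a μ)
    (ω : ℂ) (hω : ω = Complex.exp (2 * Real.pi * Complex.I / n))
    (k : ℕ) (hk1 : 1 ≤ k) (hk2 : k ≤ n) :
    (CS n a).mulVec (fun i : ZMod n => ω ^ (i.val * k)) =
      ((1 / 2 : ℂ) * ∏ μ : Fin 4, (ω ^ ((k : ℤ) * a μ) - 1)) •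
        (fun i : ZMod n => ω ^ (i.val * k)) := by
  have hω0 : ω ≠ 0 := by rw [hω]; exact Complex.exp_ne_zero _
  have hωn : ω ^ (n : ℤ) = 1 := by
    have hn' : (n : ℂ) ≠ 0 := Nat.cast_ne_zero.mpr (NeZero.ne n)
    rw [hω, ← Complex.exp_int_mul,
      show (n : ℤ) * (2 * Real.pi * Complex.I / n) = 2 * Real.pi * Complex.I by
        push_cast; field_simp]
    exact Complex.exp_two_pi_mul_I
  have key : ∀ s t : ℤ, s ≡ t [ZMOD n] → ω ^ s = ω ^ t := by
    intro s t hst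
    obtain ⟨c, hc⟩ := hst.dvd
    have : t = s + n * c := by linarith
    rw [this, zpow_add₀ hω0, _root_.zpow_mul, hωn, _root_.one_zpow, mul_one]
  set v : ZMod n → ℂ := fun i : ZMod n => ω ^ (i.val * k) with hv
  have hshift : ∀ (i : ZMod n) (m : ℤ), v (i + (m : ZMod n)) = v i * ω ^ ((k : ℤ) * m) := by
    intro i m
    show ω ^ ((i + (m : ZMod n)).val * k) = ω ^ (i.val * k) * ω ^ ((k : ℤ) * m)
    rw [← zpow_natCast ω ((i + (m : ZMod n)).val * k), ← zpow_natCast ω (i.val * k),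
      ← zpow_add₀ hω0]
    apply key
    rw [← ZMod.intCast_eq_intCast_iff]
    push_cast
    simp [ZMod.natCast_val, ZMod.intCast_cast, ZMod.cast_id]
    ring
  set z : Fin 4 → ℂ := fun μ => ω ^ ((k : ℤ) * a μ) with hz
  set w : Fin 4 → ℂ := fun μ => ω ^ (-((k : ℤ) * a μ)) with hw
  have hzw : ∀ μ, z μ * w μ = 1 := by
    intro μ; rw [hz, hw, ← zpow_add₀ hω0, add_neg_cancel, zpow_zero]
  have h4 : z 0 * z 1 * z 2 * z 3 = 1 := by
    simp only [hz]
    rw [← zpow_add₀ hω0, ← zpow_add₀ hω0, ← zpow_add₀ hω0]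
    have : (k : ℤ) * a 0 + (k : ℤ) * a 1 + (k : ℤ) * a 2 + (k : ℤ) * a 3 ≡ 0 [ZMOD n] := by
      have h : (k : ℤ) * a 0 + (k : ℤ) * a 1 + (k : ℤ) * a 2 + (k : ℤ) * a 3
          = (k : ℤ) * ∑ μ : Fin 4, a μ := by rw [Fin.sum_univ_four]; ring
      rw [h]
      exact (Int.modEq_zero_iff_dvd).mpr (hsum.mul_left _)
    rw [key _ 0 this, zpow_zero]
  -- the two row computations specialized
  have hplus : ∀ (i : ZMod n) (μ : Fin 4), v (i + (a μ : ZMod n)) = v i * z μ := by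
    intro i μ; exact hshift i (a μ)
  have hpair : ∀ (i : ZMod n) (μ : Fin 3),
      v (i + (a μ.castSucc : ZMod n) + (a 3 : ZMod n)) = v i * (z μ.castSucc * z 3) := by
    intro i μ
    have : i + (a μ.castSucc : ZMod n) + (a 3 : ZMod n)
        = i + ((a μ.castSucc + a 3 : ℤ) : ZMod n) := by push_cast; ring
    rw [this, hshift]
    rw [show (k : ℤ) * (a μ.castSucc + a 3) = (k : ℤ) * a μ.castSucc + (k : ℤ) * a 3 by ring,
      zpow_add₀ hω0]
  have hminus : ∀ (i : ZMod n) (μ : Fin 4), v (i - (a μ : ZMod n)) = v i * w μ := by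
    intro i μ
    have : i - (a μ : ZMod n) = i + ((-(a μ) : ℤ) : ZMod n) := by push_cast; ring
    rw [this, hshift, show (k : ℤ) * (-(a μ)) = -((k : ℤ) * a μ) by ring]
  have hmpair : ∀ (i : ZMod n) (μ : Fin 3),
      v (i - ((a μ.castSucc : ZMod n) + (a 3 : ZMod n))) = v i * (w μ.castSucc * w 3) := by
    intro i μ
    have : i - ((a μ.castSucc : ZMod n) + (a 3 : ZMod n))
        = i + ((-(a μ.castSucc + a 3) : ℤ) : ZMod n) := by push_cast; ring
    rw [this, hshift,
      show (k : ℤ) * (-(a μ.castSucc + a 3))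
        = -((k : ℤ) * a μ.castSucc) + (-((k : ℤ) * a 3)) by ring,
      zpow_add₀ hω0]
  funext i
  show ((1 / 2 : ℂ) • (Cmat n a + (Cmat n a)ᵀ)).mulVec v i = _
  rw [Matrix.smul_mulVec, Matrix.add_mulVec]
  simp only [Pi.smul_apply, Pi.add_apply, smul_eq_mul]
  rw [Cmat_row, Cmat_col]
  simp only [hplus, hpair, hminus, hmpair]
  rw [Fin.sum_univ_four, Fin.sum_univ_four, Fin.sum_univ_three, Fin.sum_univ_three,
    Fin.prod_univ_four]
  have hw0 : w 0 = z 1 * z 2 * z 3 := by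
    calc w 0 = w 0 * (z 0 * z 1 * z 2 * z 3) := by rw [h4, mul_one]
    _ = (z 0 * w 0) * (z 1 * z 2 * z 3) := by ring
    _ = z 1 * z 2 * z 3 := by rw [hzw 0, one_mul]
  have hw1 : w 1 = z 0 * z 2 * z 3 := by
    calc w 1 = w 1 * (z 0 * z 1 * z 2 * z 3) := by rw [h4, mul_one]
    _ = (z 1 * w 1) * (z 0 * z 2 * z 3) := by ring
    _ = z 0 * z 2 * z 3 := by rw [hzw 1, one_mul]
  have hw2 : w 2 = z 0 * z 1 * z 3 := by
    calc w 2 = w 2 * (z 0 * z 1 * z 2 * z 3) := by rw [h4, mul_one]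
    _ = (z 2 * w 2) * (z 0 * z 1 * z 3) := by ring
    _ = z 0 * z 1 * z 3 := by rw [hzw 2, one_mul]
  have hw3 : w 3 = z 0 * z 1 * z 2 := by
    calc w 3 = w 3 * (z 0 * z 1 * z 2 * z 3) := by rw [h4, mul_one]
    _ = (z 3 * w 3) * (z 0 * z 1 * z 2) := by ring
    _ = z 0 * z 1 * z 2 := by rw [hzw 3, one_mul]
  have hcast : ((0 : Fin 3).castSucc = (0 : Fin 4)) ∧ ((1 : Fin 3).castSucc = (1 : Fin 4))
      ∧ ((2 : Fin 3).castSucc = (2 : Fin 4)) := by exact ⟨rfl, rfl, rfl⟩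
  rw [hcast.1, hcast.2.1, hcast.2.2, hw0, hw1, hw2, hw3]
  linear_combination (1/2 * v i * (z 0 * z 1 + z 0 * z 2 + z 1 * z 2 - 1)) * h4
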